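/- arXiv:1909.02943 — 5 statements merged into one kernel-verified Lean document; each statement's English description precedes it below -/
import Mathlib

section
/- The series ∑_{n=1}^∞ (1/4^n) * C(2n,n) / n equals 2·ln(2). -/
/-!
With `cₙ = C(2n,n) / 4ⁿ`, the generating function `∑ cₙ xⁿ` is the binomial series of
`(1 - x)^(-1/2)`. Integrating `((1 - x)^(-1/2) - 1) / x` termwise gives
`∑_{n ≥ 1} cₙ xⁿ / n = 2 log 2 - 2 log (1 + √(1 - x))` on `(-1, 1)`. Since `cₙ` decreases with
`cₙ / n ≤ 2 (cₙ₋₁ - cₙ)`, the series converges at `x = 1`, and Abel's theorem lets `x → 1⁻`.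
-/

open Real Finset

/-- Real zeta value ζ(k) = ∑_{n≥1} 1/n^k. -/
noncomputable def zval (k : ℕ) : ℝ := ∑' n : ℕ, 1 / ((n : ℝ) + 1) ^ k

/-- Li₄(1/2) = ∑_{k≥1} (1/2)^k / k^4. -/
noncomputable def Li4half : ℝ := ∑' n : ℕ, (1 / 2 : ℝ) ^ (n + 1) / ((n : ℝ) + 1) ^ 4

/-- Harmonic number H_n = ∑_{k=1}^n 1/k. -/
noncomputable def H (n : ℕ) : ℝ := ∑ k ∈ Finset.range n, 1 / ((k : ℝ) + 1)

/-- Generalized harmonic number H_n^{(2)} = ∑_{k=1}^n 1/k². -/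
noncomputable def H2 (n : ℕ) : ℝ := ∑ k ∈ Finset.range n, 1 / ((k : ℝ) + 1) ^ 2

/-- Odd harmonic number O_n = ∑_{k=1}^n 1/(2k-1). -/
noncomputable def Oh (n : ℕ) : ℝ := ∑ k ∈ Finset.range n, 1 / (2 * (k : ℝ) + 1)

open Filter Topology

lemma hasDerivAt_tsum_div_succ_mul_pow_succ {a : ℕ → ℝ} {C : ℝ} (ha : ∀ n, |a n| ≤ C)
    {x : ℝ} (hx : |x| < 1) :
    HasDerivAt (fun y ↦ ∑' n : ℕ, a n / (n + 1) * y ^ (n + 1)) (∑' n : ℕ, a n * x ^ n) x := by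
  obtain ⟨r, hxr, hr1⟩ := exists_between hx
  have hr : 0 < r := (abs_nonneg x).trans_lt hxr
  refine hasDerivAt_tsum_of_isPreconnected (t := Set.Ioo (-r) r) (y₀ := 0)
    (g := fun n y ↦ a n / (n + 1) * y ^ (n + 1)) (g' := fun n y ↦ a n * y ^ n)
    (u := fun n ↦ C * r ^ n)
    ((summable_geometric_of_lt_one hr.le hr1).mul_left C) isOpen_Ioo isPreconnected_Ioo
    (fun n y _ ↦ ?_) (fun n y hy ↦ ?_) ⟨neg_lt_zero.mpr hr, hr⟩ (by simp)
    (abs_lt.mp hxr)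
  · refine ((hasDerivAt_pow (n + 1) y).const_mul (a n / (n + 1))).congr_deriv ?_
    push_cast [Nat.add_sub_cancel]
    field_simp
  · rw [norm_mul, norm_pow, Real.norm_eq_abs, Real.norm_eq_abs]
    exact mul_le_mul (ha n) (pow_le_pow_left₀ (abs_nonneg y) (abs_lt.mpr hy).le n)
      (by positivity) ((abs_nonneg _).trans (ha n))

lemma Real.tendsto_tsum_mul_pow_succ_nhdsLT {f : ℕ → ℝ} (hf : Summable f) :
    Tendsto (fun x ↦ ∑' n, f n * x ^ (n + 1)) (𝓝[<] 1) (𝓝 (∑' n, f n)) := by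
  have h := (tendsto_nhdsWithin_of_tendsto_nhds tendsto_id).mul
    (Real.tendsto_tsum_powerSeries_nhdsWithin_lt hf.hasSum.tendsto_sum_nat)
  rw [one_mul] at h
  refine h.congr fun x ↦ ?_
  simp only [id, ← tsum_mul_left, pow_succ]
  exact tsum_congr fun n ↦ by ring

noncomputable def scaledCentralBinom (n : ℕ) : ℝ := (n.centralBinom : ℝ) / 4 ^ n

lemma scaledCentralBinom_zero : scaledCentralBinom 0 = 1 := by simp [scaledCentralBinom]

lemma scaledCentralBinom_one : scaledCentralBinom 1 = 1 / 2 := by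
  norm_num [scaledCentralBinom, Nat.centralBinom]

lemma two_mul_succ_mul_scaledCentralBinom_succ (n : ℕ) :
    2 * (n + 1) * scaledCentralBinom (n + 1) = (2 * n + 1) * scaledCentralBinom n := by
  have h : ((n + 1) * (n + 1).centralBinom : ℝ) = 2 * (2 * n + 1) * n.centralBinom := by
    exact_mod_cast Nat.succ_mul_centralBinom_succ n
  simp only [scaledCentralBinom, pow_succ]
  field_simp
  linear_combination 2 * h

lemma Ring.choose_neg_half (n : ℕ) :
    Ring.choose (-(1 / 2) : ℝ) n = (-1) ^ n * scaledCentralBinom n := by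
  induction n with
  | zero => simp [scaledCentralBinom_zero]
  | succ n ih =>
    have h := Ring.choose_smul_choose (-(1 / 2) : ℝ) (Nat.le_add_right n 1)
    simp only [Nat.choose_succ_self_right, Nat.add_sub_cancel_left, Ring.choose_one_right, ih,
      nsmul_eq_mul] at h
    have := two_mul_succ_mul_scaledCentralBinom_succ n
    push_cast at h
    rw [pow_succ]
    have hn : (n : ℝ) + 1 ≠ 0 := by positivity
    apply mul_left_cancel₀ hn
    linear_combination h + (-1) ^ n / 2 * this

lemma scaledCentralBinom_nonneg (n : ℕ) : 0 ≤ scaledCentralBinom n := by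
  unfold scaledCentralBinom; positivity

lemma scaledCentralBinom_succ_le (n : ℕ) : scaledCentralBinom (n + 1) ≤ scaledCentralBinom n := by
  nlinarith [two_mul_succ_mul_scaledCentralBinom_succ n, scaledCentralBinom_nonneg n,
    scaledCentralBinom_nonneg (n + 1)]

lemma scaledCentralBinom_le_one (n : ℕ) : scaledCentralBinom n ≤ 1 :=
  scaledCentralBinom_zero ▸ antitone_nat_of_succ_le scaledCentralBinom_succ_le (Nat.zero_le n)

lemma scaledCentralBinom_succ_div_le (n : ℕ) :
    scaledCentralBinom (n + 1) / (n + 1) ≤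
      2 * (scaledCentralBinom n - scaledCentralBinom (n + 1)) := by
  have hn : (0 : ℝ) < n + 1 := by positivity
  rw [div_le_iff₀ hn]
  nlinarith [two_mul_succ_mul_scaledCentralBinom_succ n, scaledCentralBinom_succ_le n]

lemma summable_scaledCentralBinom_succ_div :
    Summable fun n : ℕ ↦ scaledCentralBinom (n + 1) / (n + 1) := by
  refine summable_of_sum_range_le (c := 2)
    (fun n ↦ div_nonneg (scaledCentralBinom_nonneg _) (by positivity)) fun N ↦ ?_
  calc ∑ n ∈ range N, scaledCentralBinom (n + 1) / (n + 1)
      ≤ ∑ n ∈ range N, 2 * (scaledCentralBinom n - scaledCentralBinom (n + 1)) :=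
        sum_le_sum fun n _ ↦ scaledCentralBinom_succ_div_le n
    _ = 2 * (scaledCentralBinom 0 - scaledCentralBinom N) := by
        rw [← mul_sum, sum_range_sub']
    _ ≤ 2 := by
        rw [scaledCentralBinom_zero]; linarith [scaledCentralBinom_nonneg N]

lemma hasSum_scaledCentralBinom_mul_pow {x : ℝ} (hx : |x| < 1) :
    HasSum (fun n ↦ scaledCentralBinom n * x ^ n) (1 / √(1 - x)) := by
  have h := (one_add_rpow_hasFPowerSeriesOnBall_zero (a := -(1 / 2))).hasSum (y := -x)
    (by simpa [enorm_eq_nnnorm, ← NNReal.coe_lt_one] using hx)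
  have hterm (n : ℕ) :
      (-1) ^ n * scaledCentralBinom n * (-x) ^ n = scaledCentralBinom n * x ^ n := by
    rw [neg_pow x, mul_mul_mul_comm, ← mul_pow, neg_one_mul, neg_neg, one_pow, one_mul]
  have hval : (1 + (0 + -x)) ^ (-(1 / 2) : ℝ) = 1 / √(1 - x) := by
    rw [zero_add, ← sub_eq_add_neg, Real.sqrt_eq_rpow, Real.rpow_neg (by linarith [le_abs_self x]),
      inv_eq_one_div]
  simpa only [binomialSeries, FormalMultilinearSeries.ofScalars_apply_eq, smul_eq_mul,
    Ring.choose_neg_half, hterm, hval] using h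

lemma hasSum_scaledCentralBinom_succ_mul_pow {x : ℝ} (hx : |x| < 1) :
    HasSum (fun n ↦ scaledCentralBinom (n + 1) * x ^ n) (1 / (√(1 - x) * (1 + √(1 - x)))) := by
  by_cases hx0 : x = 0
  · subst hx0
    simpa [scaledCentralBinom_one, one_add_one_eq_two] using
      hasSum_single (f := fun n ↦ scaledCentralBinom (n + 1) * 0 ^ n) 0 fun n hn ↦ by simp [hn]
  · have hs : 0 < √(1 - x) := Real.sqrt_pos.mpr (by linarith [le_abs_self x])
    have hs2 : √(1 - x) ^ 2 = 1 - x := Real.sq_sqrt (by linarith [le_abs_self x])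
    have h := ((hasSum_nat_add_iff' 1).mpr (hasSum_scaledCentralBinom_mul_pow hx)).mul_left x⁻¹
    have hterm : (fun n ↦ scaledCentralBinom (n + 1) * x ^ n) =
        fun n ↦ x⁻¹ * (scaledCentralBinom (n + 1) * x ^ (n + 1)) :=
      funext fun n ↦ by field_simp; ring
    have hval : 1 / (√(1 - x) * (1 + √(1 - x))) =
        x⁻¹ * (1 / √(1 - x) - ∑ i ∈ range 1, scaledCentralBinom i * x ^ i) := by
      simp only [range_one, sum_singleton, scaledCentralBinom_zero, pow_zero, mul_one]
      field_simp
      linear_combination hs2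
    rwa [hterm, hval]

lemma tsum_scaledCentralBinom_succ_div_mul_pow_succ {x : ℝ} (hx : x ∈ Set.Ioo (-1) 1) :
    ∑' n : ℕ, scaledCentralBinom (n + 1) / (n + 1) * x ^ (n + 1) =
      2 * log 2 - 2 * log (1 + √(1 - x)) := by
  have hF (y : ℝ) (hy : y ∈ Set.Ioo (-1) 1) :
      HasDerivAt (fun z ↦ ∑' n : ℕ, scaledCentralBinom (n + 1) / (n + 1) * z ^ (n + 1))
        (1 / (√(1 - y) * (1 + √(1 - y)))) y := by
    have hy' : |y| < 1 := abs_lt.mpr hy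
    rw [← (hasSum_scaledCentralBinom_succ_mul_pow hy').tsum_eq]
    exact hasDerivAt_tsum_div_succ_mul_pow_succ (C := 1)
      (fun n ↦ (abs_of_nonneg (scaledCentralBinom_nonneg _)).trans_le
        (scaledCentralBinom_le_one _)) hy'
  have hlog (y : ℝ) (hy : y ∈ Set.Ioo (-1) 1) :
      HasDerivAt (fun z ↦ 2 * log 2 - 2 * log (1 + √(1 - z)))
        (1 / (√(1 - y) * (1 + √(1 - y)))) y := by
    have := ((((hasDerivAt_id' y).const_sub 1).sqrt (by linarith [hy.2])).const_add 1).log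
      (by positivity)
    refine ((this.const_mul 2).const_sub (2 * log 2)).congr_deriv ?_
    field_simp
  refine isOpen_Ioo.eqOn_of_deriv_eq isPreconnected_Ioo
    (fun y hy ↦ (hF y hy).differentiableAt.differentiableWithinAt)
    (fun y hy ↦ (hlog y hy).differentiableAt.differentiableWithinAt)
    (fun y hy ↦ (hF y hy).deriv.trans (hlog y hy).deriv.symm) (x := 0) (by norm_num) ?_ hx
  norm_num

theorem stmt_0 :
    ∑' n : ℕ, ((Nat.choose (2 * (n + 1)) (n + 1) : ℝ) / 4 ^ (n + 1)) / ((n : ℝ) + 1) =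
    2 * Real.log 2 := by
  change ∑' n : ℕ, scaledCentralBinom (n + 1) / (n + 1) = _
  have habel := Real.tendsto_tsum_mul_pow_succ_nhdsLT summable_scaledCentralBinom_succ_div
  have hclosed : Tendsto (fun x : ℝ ↦ 2 * log 2 - 2 * log (1 + √(1 - x))) (𝓝[<] 1)
      (𝓝 (2 * log 2)) := by
    have : ContinuousAt (fun x : ℝ ↦ 2 * log 2 - 2 * log (1 + √(1 - x))) 1 :=
      by fun_prop (disch := norm_num)
    simpa using this.tendsto.mono_left nhdsWithin_le_nhds
  refine tendsto_nhds_unique (habel.congr' ?_) hclosed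
  filter_upwards [Ioo_mem_nhdsLT (show (-1 : ℝ) < 1 by norm_num)] with x hx
  exact tsum_scaledCentralBinom_succ_div_mul_pow_succ hx
end

section
/- The series ∑_{n=1}^∞ (1/4^n) * C(2n,n) / n^2 equals ζ(2) − 2·ln(2)^2. -/
open Real Finset

open Filter Topology

/-!
Let `F_k(x) = ∑_{m ≥ 1} c_m x^m / m^k`, where `c_m = C(2m,m)/4^m` are the Taylor coefficients of
`(1 - x)^(-1/2)`, so that `F_0(x) = (1 - x)^(-1/2) - 1` and `x F_k' = F_{k-1}`.
With `u = √(1 - x)`, differentiating shows that `F_1(x) = -2 log((1 + u)/2)` and then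
`F_2(x) = 2 Li₂((1 - u)/2) - log²((1 + u)/2)`, both sides vanishing at `x = 0`.
At `x = 1` the sum is `2 Li₂(1/2) - log² 2`, and Euler's reflection formula
`Li₂(x) + Li₂(1 - x) + log x log(1 - x) = ζ(2)` at `x = 1/2` turns it into `ζ(2) - 2 log² 2`.
-/

lemma eq_of_hasDerivAt_zero {f : ℝ → ℝ} {a b : ℝ} (hab : a ≤ b)
    (hf : ContinuousOn f (Set.Icc a b)) (hf' : ∀ x ∈ Set.Ioo a b, HasDerivAt f 0 x) :
    f b = f a := by
  rcases hab.eq_or_lt with rfl | hab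
  · rfl
  obtain ⟨_, _, h⟩ := exists_hasDerivAt_eq_slope f (fun _ => 0) hab hf hf'
  rw [eq_comm, div_eq_zero_iff, sub_eq_zero, sub_eq_zero] at h
  exact h.resolve_right hab.ne'

-- `∑_{m ≥ 1} c_{m-1} x^m / m^k`, indexed from `0` so that no term has a junk denominator `0^k`.
noncomputable def polylogSeries (k : ℕ) (c : ℕ → ℝ) (x : ℝ) : ℝ :=
  ∑' n : ℕ, c n * x ^ (n + 1) / ((n : ℝ) + 1) ^ k

section polylogSeries

variable {k : ℕ} {c : ℕ → ℝ} {C x : ℝ}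

@[simp]
lemma polylogSeries_apply_zero : polylogSeries k c 0 = 0 := by
  simp [polylogSeries]

lemma hasDerivAt_polylogSeries_succ (hc : ∀ n, |c n| ≤ C) (hx : |x| < 1) :
    HasDerivAt (polylogSeries (k + 1) c) (∑' n, c n * x ^ n / ((n : ℝ) + 1) ^ k) x := by
  obtain ⟨r, hxr, hr⟩ := exists_between hx
  have hr0 : 0 < r := (abs_nonneg x).trans_lt hxr
  have hC : 0 ≤ C := (abs_nonneg _).trans (hc 0)
  refine hasDerivAt_tsum_of_isPreconnected (u := fun n => C * r ^ n)
    (g := fun n y => c n * y ^ (n + 1) / ((n : ℝ) + 1) ^ (k + 1))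
    (g' := fun n y => c n * y ^ n / ((n : ℝ) + 1) ^ k)
    ((summable_geometric_of_lt_one (by positivity) hr).mul_left C) isOpen_Ioo isPreconnected_Ioo
    (fun n y _ => ?_) (fun n y hy => ?_) (y₀ := 0) ⟨by linarith, hr0⟩ (by simp) (abs_lt.1 hxr)
  · refine (((hasDerivAt_pow (n + 1) y).const_mul (c n)).div_const _).congr_deriv ?_
    field_simp
    push_cast
    ring
  · have hyr : |y| ≤ r := abs_le.2 ⟨hy.1.le, hy.2.le⟩
    have hk : 1 ≤ ((n : ℝ) + 1) ^ k := one_le_pow₀ (le_add_of_nonneg_left n.cast_nonneg)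
    rw [Real.norm_eq_abs, abs_div, abs_mul, abs_pow,
      abs_of_pos (by positivity : (0 : ℝ) < ((n : ℝ) + 1) ^ k)]
    calc |c n| * |y| ^ n / ((n : ℝ) + 1) ^ k ≤ |c n| * |y| ^ n := div_le_self (by positivity) hk
      _ ≤ C * r ^ n :=
        mul_le_mul (hc n) (pow_le_pow_left₀ (abs_nonneg y) hyr n) (by positivity) hC

lemma hasDerivAt_polylogSeries_succ_of_ne_zero (hc : ∀ n, |c n| ≤ C) (hx : |x| < 1)
    (hx0 : x ≠ 0) : HasDerivAt (polylogSeries (k + 1) c) (polylogSeries k c x / x) x := by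
  convert hasDerivAt_polylogSeries_succ hc hx using 1
  rw [polylogSeries, ← tsum_div_const]
  congr 1 with n
  field_simp
  ring

lemma continuousOn_polylogSeries_succ (hc : ∀ n, |c n| ≤ C) :
    ContinuousOn (polylogSeries (k + 1) c) (Set.Ioo (-1) 1) := fun _ hx =>
  (hasDerivAt_polylogSeries_succ hc (abs_lt.2 hx)).continuousAt.continuousWithinAt

lemma continuousOn_polylogSeries (hk : 2 ≤ k) (hc : ∀ n, |c n| ≤ C) :
    ContinuousOn (polylogSeries k c) (Set.Icc (-1) 1) := by
  have hs : Summable fun n : ℕ => C * (1 / ((n : ℝ) + 1) ^ k) := by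
    refine Summable.mul_left C ?_
    exact_mod_cast (summable_nat_add_iff 1).2 (Real.summable_one_div_nat_pow.2 hk)
  refine continuousOn_tsum (fun n => by fun_prop) hs fun n y hy => ?_
  have hy1 : |y| ^ (n + 1) ≤ 1 := pow_le_one₀ (abs_nonneg y) (abs_le.2 hy)
  rw [Real.norm_eq_abs, abs_div, abs_mul, abs_pow,
    abs_of_pos (by positivity : (0 : ℝ) < ((n : ℝ) + 1) ^ k), mul_one_div]
  gcongr
  exact (mul_le_of_le_one_right (abs_nonneg _) hy1).trans (hc n)

end polylogSeries

noncomputable def dilog (x : ℝ) : ℝ := polylogSeries 2 (fun _ => 1) x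

@[simp]
lemma dilog_zero : dilog 0 = 0 := polylogSeries_apply_zero

lemma polylogSeries_one_const_one {x : ℝ} (hx : |x| < 1) :
    polylogSeries 1 (fun _ => 1) x = -log (1 - x) := by
  simpa [polylogSeries] using (hasSum_pow_div_log_of_abs_lt_one hx).tsum_eq

lemma hasDerivAt_dilog {x : ℝ} (hx : |x| < 1) (hx0 : x ≠ 0) :
    HasDerivAt dilog (-log (1 - x) / x) x := by
  have h := hasDerivAt_polylogSeries_succ_of_ne_zero (k := 1) (c := fun _ => 1) (C := 1)
    (fun _ => by simp) hx hx0
  rwa [polylogSeries_one_const_one hx] at h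

lemma continuousOn_dilog : ContinuousOn dilog (Set.Icc (-1) 1) :=
  continuousOn_polylogSeries le_rfl (C := 1) fun _ => by simp

lemma tendsto_log_mul_log_one_sub : Tendsto (fun x => log x * log (1 - x)) (𝓝 0) (𝓝 0) := by
  have hO : (fun x => log (1 - x)) =O[𝓝 0] fun x => x := by
    simpa using (((hasDerivAt_id (0 : ℝ)).const_sub 1).log (by norm_num)).isBigO_sub
  refine ((Asymptotics.isBigO_refl log (𝓝 0)).mul hO).trans_tendsto ?_
  simpa [mul_comm] using continuous_mul_log.tendsto 0

lemma continuousOn_log_mul_log_one_sub :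
    ContinuousOn (fun x => log x * log (1 - x)) (Set.Iio 1) := by
  intro x hx
  rcases eq_or_ne x 0 with rfl | hx0
  · refine ContinuousAt.continuousWithinAt ?_
    simpa [ContinuousAt] using tendsto_log_mul_log_one_sub
  · refine ((continuousAt_log hx0).mul ?_).continuousWithinAt
    exact (continuousAt_const.sub continuousAt_id).log (sub_ne_zero.2 (ne_of_gt hx))

theorem dilog_add_dilog_one_sub {x : ℝ} (hx : x ∈ Set.Icc 0 1) :
    dilog x + dilog (1 - x) + log x * log (1 - x) = dilog 1 := by
  rcases hx.2.eq_or_lt with rfl | hx1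
  · simp
  set Ψ : ℝ → ℝ := fun y => dilog y + dilog (1 - y) + log y * log (1 - y)
  have hcont : ContinuousOn Ψ (Set.Icc 0 x) := by
    refine ((continuousOn_dilog.mono ?_).add (continuousOn_dilog.comp (by fun_prop) ?_)).add
      (continuousOn_log_mul_log_one_sub.mono ?_)
    · exact fun y hy => ⟨by linarith [hy.1], by linarith [hy.2]⟩
    · exact fun y hy => ⟨by linarith [hy.2], by linarith [hy.1]⟩
    · exact fun y hy => lt_of_le_of_lt hy.2 hx1
  have hderiv : ∀ y ∈ Set.Ioo 0 x, HasDerivAt Ψ 0 y := by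
    intro y ⟨hy0, hyx⟩
    have hy1 : y < 1 := hyx.trans hx1
    have hsub : HasDerivAt (fun y : ℝ => 1 - y) (-1) y := (hasDerivAt_id' y).const_sub 1
    have h1 := hasDerivAt_dilog (abs_lt.2 ⟨by linarith, hy1⟩) hy0.ne'
    have h2 :=
      (hasDerivAt_dilog (abs_lt.2 ⟨by linarith, by linarith⟩) (by linarith)).comp y hsub
    have h3 := (hasDerivAt_log hy0.ne').mul (hsub.log (by linarith))
    refine ((h1.add h2).add h3).congr_deriv ?_
    simp only [sub_sub_cancel]
    have : 1 - y ≠ 0 := by linarith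
    field_simp
    ring
  simpa [Ψ] using eq_of_hasDerivAt_zero hx.1 hcont hderiv

lemma two_mul_dilog_one_half : 2 * dilog (1 / 2) = dilog 1 - log 2 ^ 2 := by
  have h := dilog_add_dilog_one_sub (x := 1 / 2) ⟨by norm_num, by norm_num⟩
  rw [show (1 : ℝ) - 1 / 2 = 1 / 2 by norm_num,
    show log (1 / 2 : ℝ) = -log 2 by rw [one_div, log_inv]] at h
  linear_combination h

lemma multichoose_one_half (n : ℕ) :
    Ring.multichoose (1 / 2 : ℝ) n = (Nat.centralBinom n : ℝ) / 4 ^ n := by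
  induction n with
  | zero => simp
  | succ n ih =>
    have hmul : ((n + 1).factorial : ℝ) * Ring.multichoose (1 / 2 : ℝ) (n + 1) =
        (n.factorial : ℝ) * Ring.multichoose (1 / 2 : ℝ) n * (1 / 2 + n) := by
      simp only [← nsmul_eq_mul, Ring.factorial_nsmul_multichoose_eq_ascPochhammer,
        Polynomial.ascPochhammer_smeval_eq_eval, ascPochhammer_succ_eval]
    have hcb : ((n : ℝ) + 1) * Nat.centralBinom (n + 1) =
        2 * (2 * n + 1) * Nat.centralBinom n := by
      exact_mod_cast Nat.succ_mul_centralBinom_succ n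
    rw [ih, Nat.factorial_succ, Nat.cast_mul] at hmul
    have : (n.factorial : ℝ) ≠ 0 := by positivity
    field_simp at hmul
    push_cast at hmul
    rw [eq_div_iff (by positivity)]
    refine mul_left_cancel₀ (by positivity : (n : ℝ) + 1 ≠ 0) ?_
    linear_combination 2 * hmul - hcb

lemma hasSum_multichoose_one_half_mul_pow {x : ℝ} (hx : |x| < 1) :
    HasSum (fun n => Ring.multichoose (1 / 2 : ℝ) n * x ^ n) (1 / √(1 - x)) := by
  have h := (one_div_one_sub_rpow_hasFPowerSeriesOnBall_zero (1 / 2)).hasSum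
    (y := x) (by simpa [enorm_eq_nnnorm, ← NNReal.coe_lt_coe] using hx)
  simp only [FormalMultilinearSeries.ofScalars_apply_eq, smul_eq_mul, zero_add,
    ← Real.sqrt_eq_rpow] at h
  simpa only [Ring.multichoose_eq] using h

noncomputable def invSqrtCoeff (n : ℕ) : ℝ := Ring.multichoose (1 / 2 : ℝ) (n + 1)

lemma invSqrtCoeff_eq (n : ℕ) : invSqrtCoeff n = ((n + 1).centralBinom : ℝ) / 4 ^ (n + 1) :=
  multichoose_one_half (n + 1)

lemma abs_invSqrtCoeff_le_one (n : ℕ) : |invSqrtCoeff n| ≤ 1 := by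
  rw [invSqrtCoeff_eq, abs_of_nonneg (by positivity), div_le_one (by positivity)]
  exact_mod_cast Nat.centralBinom_le_four_pow (n + 1)

lemma polylogSeries_zero_invSqrtCoeff {x : ℝ} (hx : |x| < 1) :
    polylogSeries 0 invSqrtCoeff x = 1 / √(1 - x) - 1 := by
  have h := (hasSum_nat_add_iff' 1).2 (hasSum_multichoose_one_half_mul_pow hx)
  simpa [polylogSeries, invSqrtCoeff] using h.tsum_eq

lemma hasDerivAt_sqrt_one_sub {y : ℝ} (hy : y < 1) :
    HasDerivAt (fun y => √(1 - y)) (-1 / (2 * √(1 - y))) y :=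
  ((hasDerivAt_id' y).const_sub 1).sqrt (by linarith)

lemma hasDerivAt_log_one_add_sqrt_one_sub_div_two {y : ℝ} (hy : y < 1) :
    HasDerivAt (fun y => log ((1 + √(1 - y)) / 2))
      (-1 / (2 * √(1 - y) * (1 + √(1 - y)))) y := by
  have hu := Real.sqrt_nonneg (1 - y)
  have h := (((hasDerivAt_sqrt_one_sub hy).const_add 1).div_const 2).log (by positivity)
  refine h.congr_deriv ?_
  field_simp

lemma polylogSeries_one_invSqrtCoeff {x : ℝ} (hx : x ∈ Set.Ico 0 1) :
    polylogSeries 1 invSqrtCoeff x = -2 * log ((1 + √(1 - x)) / 2) := by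
  set φ : ℝ → ℝ := fun y => polylogSeries 1 invSqrtCoeff y + 2 * log ((1 + √(1 - y)) / 2)
  have hcont : ContinuousOn φ (Set.Icc 0 x) := by
    refine ((continuousOn_polylogSeries_succ abs_invSqrtCoeff_le_one).mono ?_).add ?_
    · exact fun y hy => ⟨by linarith [hy.1], hy.2.trans_lt hx.2⟩
    · refine continuousOn_const.mul (ContinuousOn.log (by fun_prop) fun y _ => ?_)
      positivity
  have hderiv : ∀ y ∈ Set.Ioo 0 x, HasDerivAt φ 0 y := by
    intro y ⟨hy0, hyx⟩
    have hy1 : y < 1 := hyx.trans hx.2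
    have hy : |y| < 1 := abs_lt.2 ⟨by linarith, hy1⟩
    have h1 := hasDerivAt_polylogSeries_succ_of_ne_zero (k := 0) abs_invSqrtCoeff_le_one hy hy0.ne'
    rw [polylogSeries_zero_invSqrtCoeff hy] at h1
    refine (h1.add ((hasDerivAt_log_one_add_sqrt_one_sub_div_two hy1).const_mul 2)).congr_deriv ?_
    have hu : 0 < √(1 - y) := Real.sqrt_pos.2 (by linarith)
    have hyu : y = 1 - √(1 - y) ^ 2 := by rw [Real.sq_sqrt (by linarith)]; ring
    generalize √(1 - y) = u at hu hyu ⊢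
    subst hyu
    field_simp
    ring
  have h0 : φ 0 = 0 := by simp [φ]
  have h := (eq_of_hasDerivAt_zero hx.1 hcont hderiv).trans h0
  simp only [φ] at h
  linarith

lemma polylogSeries_two_invSqrtCoeff {x : ℝ} (hx : x ∈ Set.Icc 0 1) :
    polylogSeries 2 invSqrtCoeff x =
      2 * dilog ((1 - √(1 - x)) / 2) - log ((1 + √(1 - x)) / 2) ^ 2 := by
  set Ψ : ℝ → ℝ := fun y =>
    polylogSeries 2 invSqrtCoeff y - 2 * dilog ((1 - √(1 - y)) / 2) +
      log ((1 + √(1 - y)) / 2) ^ 2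
  have hcont : ContinuousOn Ψ (Set.Icc 0 x) := by
    have hsqrt : ∀ y ∈ Set.Icc (0 : ℝ) x, √(1 - y) ≤ 1 := fun y hy =>
      Real.sqrt_le_one.2 (by linarith [hy.1])
    refine (((continuousOn_polylogSeries le_rfl abs_invSqrtCoeff_le_one).mono ?_).sub
      (continuousOn_const.mul (continuousOn_dilog.comp (by fun_prop) ?_))).add
      ((ContinuousOn.log (f := fun y => (1 + √(1 - y)) / 2) (by fun_prop)
        fun y _ => by positivity).pow 2)
    · exact fun y hy => ⟨by linarith [hy.1], hy.2.trans hx.2⟩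
    · exact fun y hy => ⟨by linarith [hsqrt y hy], by linarith [Real.sqrt_nonneg (1 - y)]⟩
  have hderiv : ∀ y ∈ Set.Ioo 0 x, HasDerivAt Ψ 0 y := by
    intro y ⟨hy0, hyx⟩
    have hy1 : y < 1 := hyx.trans_le hx.2
    have hy : |y| < 1 := abs_lt.2 ⟨by linarith, hy1⟩
    have hu0 : 0 < √(1 - y) := Real.sqrt_pos.2 (by linarith)
    have hu1 : √(1 - y) < 1 := (Real.sqrt_lt' one_pos).2 (by linarith)
    have h1 := hasDerivAt_polylogSeries_succ_of_ne_zero (k := 1) abs_invSqrtCoeff_le_one hy hy0.ne'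
    rw [polylogSeries_one_invSqrtCoeff ⟨hy0.le, hy1⟩] at h1
    have h2 := (hasDerivAt_dilog (abs_lt.2 ⟨by linarith, by linarith⟩) (by linarith)).comp y
      (((hasDerivAt_sqrt_one_sub hy1).const_sub 1).div_const 2)
    have h3 := (hasDerivAt_log_one_add_sqrt_one_sub_div_two hy1).pow 2
    refine ((h1.sub (h2.const_mul 2)).add h3).congr_deriv ?_
    rw [show 1 - (1 - √(1 - y)) / 2 = (1 + √(1 - y)) / 2 by ring]
    have hyu : y = 1 - √(1 - y) ^ 2 := by rw [Real.sq_sqrt (by linarith)]; ring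
    generalize √(1 - y) = u at hu0 hu1 hyu ⊢
    subst hyu
    have : 1 - u ≠ 0 := by linarith
    field_simp
    ring
  have h0 : Ψ 0 = 0 := by simp [Ψ]
  have h := (eq_of_hasDerivAt_zero hx.1 hcont hderiv).trans h0
  simp only [Ψ] at h
  linarith

theorem stmt_1 :
    ∑' n : ℕ, ((Nat.choose (2 * (n + 1)) (n + 1) : ℝ) / 4 ^ (n + 1)) / ((n : ℝ) + 1) ^ 2 =
    zval 2 - 2 * Real.log 2 ^ 2 := by
  have hsum : ∑' n : ℕ, ((Nat.choose (2 * (n + 1)) (n + 1) : ℝ) / 4 ^ (n + 1)) /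
      ((n : ℝ) + 1) ^ 2 = polylogSeries 2 invSqrtCoeff 1 :=
    tsum_congr fun n => by simp [invSqrtCoeff_eq, Nat.centralBinom_eq_two_mul_choose]
  have hzeta : zval 2 = dilog 1 := tsum_congr fun n => by simp
  have hlog : log (1 / 2 : ℝ) = -log 2 := by rw [one_div, log_inv]
  rw [hsum, polylogSeries_two_invSqrtCoeff ⟨zero_le_one, le_rfl⟩, hzeta]
  simp only [sub_self, Real.sqrt_zero, sub_zero, add_zero, hlog]
  linear_combination two_mul_dilog_one_half
end

section
/- The series ∑_{n=1}^∞ (1/4^n) * C(2n,n) * H_n / n equals 2ζ(2), where H_n = ∑_{k=1}^n 1/k. -/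
open Real Finset

open Filter Topology

/-!
Write `c n = C(2n, n) / 4 ^ n` and expand `H n / n = ∑_{k ≥ 1} 1 / (k (k + n))`. After exchanging
the (nonnegative) double sum, the inner sums are `∑_{n ≥ 1} c n / (n + k) = 1 / (k c k) - 1 / k`,
the Beta integral `∫₀¹ x^(k-1) (1 - x)^(-1/2) dx` minus its `n = 0` term. So the series equals
`∑_k 1 / (k² c k) - ζ(2)`, and the first sum is `3 ζ(2)`: with
`J m k = ∫₀¹ x^(2m) (1 - x²)^k dx` one has `1 / (k² c k) = 2 J 0 (k - 1) / k`,
`J 0 (k - 1) = ∑_m J m k` and `∑_k J m k / k = 2 / (2m + 1)²`, so a second exchange turns it into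
`4 ∑_m 1 / (2m + 1)² = 3 ζ(2)`. All integrals are replaced by their product formulas, which turns
each of these identities into a telescoping series.
-/

theorem Summable.hasSum_sub_succ {f : ℕ → ℝ} {l : ℝ} (hs : Summable fun n => f n - f (n + 1))
    (hl : Tendsto f atTop (𝓝 l)) : HasSum (fun n => f n - f (n + 1)) (f 0 - l) := by
  rw [hs.hasSum_iff_tendsto_nat]
  simp_rw [sum_range_sub']
  exact tendsto_const_nhds.sub hl

theorem Antitone.hasSum_sub_succ {f : ℕ → ℝ} {l : ℝ} (hf : Antitone f)
    (hl : Tendsto f atTop (𝓝 l)) : HasSum (fun n => f n - f (n + 1)) (f 0 - l) := by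
  rw [hasSum_iff_tendsto_nat_of_nonneg fun n => sub_nonneg.2 (hf n.le_succ)]
  simp_rw [sum_range_sub']
  exact tendsto_const_nhds.sub hl

theorem Antitone.hasSum_sub_add {f : ℕ → ℝ} (hf : Antitone f) (hl : Tendsto f atTop (𝓝 0))
    (N : ℕ) : HasSum (fun n => f n - f (n + N)) (∑ j ∈ range N, f j) := by
  set g : ℕ → ℝ := fun n => ∑ j ∈ range N, f (n + j)
  have hg : Antitone g := fun a b hab => sum_le_sum fun j _ => hf (by omega)
  have hg0 : Tendsto g atTop (𝓝 0) := by
    simpa using tendsto_finsetSum (range N) fun j _ => hl.comp (tendsto_add_atTop_nat j)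
  have hdiff : ∀ n, g n - g (n + 1) = f n - f (n + N) := fun n => by
    simp only [g, ← sum_sub_distrib, add_right_comm n 1]
    simpa [add_assoc] using sum_range_sub' (fun j => f (n + j)) N
  simpa [g, hdiff] using hg.hasSum_sub_succ hg0

theorem HasSum.of_hasSum_swap_of_nonneg {α β : Type*} {f : α → β → ℝ} (hf : ∀ n k, 0 ≤ f n k)
    {a : α → ℝ} {b : β → ℝ} {s : ℝ} (ha : ∀ n, HasSum (f n) (a n))
    (hb : ∀ k, HasSum (fun n => f n k) (b k)) (hs : HasSum b s) : HasSum a s := by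
  have hswap : Summable fun p : β × α => f p.2 p.1 :=
    (summable_prod_of_nonneg fun p => hf p.2 p.1).2
      ⟨fun k => (hb k).summable, hs.summable.congr fun k => (hb k).tsum_eq.symm⟩
  have htot : HasSum (fun p : β × α => f p.2 p.1) s := by
    obtain ⟨t, ht⟩ := hswap
    rwa [(ht.prod_fiberwise hb).unique hs] at ht
  exact ((Equiv.prodComm α β).hasSum_iff.2 htot).prod_fiberwise ha

theorem tendsto_zero_of_sq_mul_le {u v : ℕ → ℝ} (hu : ∀ n, 0 ≤ u n) (hv : Tendsto v atTop atTop)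
    (h : ∀ n, u n ^ 2 * v n ≤ 1) : Tendsto u atTop (𝓝 0) := by
  have hsq : Tendsto (fun n => u n ^ 2) atTop (𝓝 0) := by
    refine squeeze_zero' (Eventually.of_forall fun n => sq_nonneg (u n)) ?_ hv.inv_tendsto_atTop
    filter_upwards [hv.eventually_gt_atTop 0] with n hn
    rw [Pi.inv_apply, ← one_div, le_div_iff₀ hn]
    exact h n
  simpa [Real.sqrt_sq (hu _)] using hsq.sqrt

theorem hasSum_one_div_mul_add (n : ℕ) :
    HasSum (fun k : ℕ => 1 / (((k : ℝ) + 1) * ((k : ℝ) + 1 + ((n : ℝ) + 1))))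
      (H (n + 1) / ((n : ℝ) + 1)) := by
  have hanti : Antitone fun k : ℕ => 1 / ((k : ℝ) + 1) := fun a b hab => by
    dsimp only
    gcongr
  have h := (hanti.hasSum_sub_add tendsto_one_div_add_atTop_nhds_zero_nat (n + 1)).div_const
    ((n : ℝ) + 1)
  refine h.congr_fun fun k => ?_
  push_cast
  field_simp
  ring

theorem hasSum_zval {k : ℕ} (hk : 1 < k) :
    HasSum (fun n : ℕ => 1 / ((n : ℝ) + 1) ^ k) (zval k) := by
  have h := (summable_nat_add_iff 1).2 (Real.summable_one_div_nat_pow.2 hk)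
  push_cast at h
  exact h.hasSum

theorem hasSum_one_div_odd_pow {k : ℕ} (hk : 1 < k) :
    HasSum (fun m : ℕ => 1 / (2 * (m : ℝ) + 1) ^ k) ((1 - 1 / 2 ^ k) * zval k) := by
  have hodd : HasSum (fun m : ℕ => 1 / (((2 * m + 1 : ℕ) : ℝ) + 1) ^ k) (1 / 2 ^ k * zval k) :=
    ((hasSum_zval hk).mul_left (1 / 2 ^ k)).congr_fun fun m => by
      push_cast
      rw [show 2 * (m : ℝ) + 1 + 1 = 2 * (m + 1) by ring, mul_pow]
      field_simp
  obtain ⟨e, he⟩ : Summable fun m : ℕ => 1 / (2 * (m : ℝ) + 1) ^ k :=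
    (hasSum_zval hk).summable.of_nonneg_of_le (fun m => by positivity) fun m => by
      gcongr; linarith [(m.cast_nonneg : (0 : ℝ) ≤ m)]
  have htot := HasSum.even_add_odd (f := fun n : ℕ => 1 / ((n : ℝ) + 1) ^ k)
    (by simpa using he) hodd
  rwa [show (1 - 1 / 2 ^ k) * zval k = e by linarith [(hasSum_zval hk).unique htot]]

noncomputable def centralBinomRatio (n : ℕ) : ℝ := (n.centralBinom : ℝ) / 4 ^ n

theorem centralBinomRatio_eq_choose (n : ℕ) :
    centralBinomRatio n = ((2 * n).choose n : ℝ) / 4 ^ n := by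
  rw [centralBinomRatio, Nat.centralBinom_eq_two_mul_choose]

theorem centralBinomRatio_zero : centralBinomRatio 0 = 1 := by simp [centralBinomRatio]

theorem centralBinomRatio_succ (n : ℕ) :
    centralBinomRatio (n + 1) = centralBinomRatio n * ((2 * n + 1) / (2 * n + 2)) := by
  have h : ((n : ℝ) + 1) * (n + 1).centralBinom = 2 * (2 * n + 1) * n.centralBinom := by
    exact_mod_cast Nat.succ_mul_centralBinom_succ n
  rw [centralBinomRatio, centralBinomRatio, pow_succ]
  field_simp
  linear_combination 2 * h

theorem centralBinomRatio_pos (n : ℕ) : 0 < centralBinomRatio n := by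
  unfold centralBinomRatio; have := n.centralBinom_pos; positivity

theorem centralBinomRatio_antitone : Antitone centralBinomRatio := by
  refine antitone_nat_of_succ_le fun n => ?_
  rw [centralBinomRatio_succ]
  refine mul_le_of_le_one_right (centralBinomRatio_pos n).le ?_
  rw [div_le_one (by positivity)]
  linarith

theorem sq_centralBinomRatio_mul_le (n : ℕ) : centralBinomRatio n ^ 2 * (2 * n + 1) ≤ 1 := by
  induction n with
  | zero => simp [centralBinomRatio_zero]
  | succ n ih =>
    have hratio : (2 * (n : ℝ) + 1) * (2 * n + 3) / (2 * n + 2) ^ 2 ≤ 1 := by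
      rw [div_le_one (by positivity)]; nlinarith
    calc centralBinomRatio (n + 1) ^ 2 * (2 * ↑(n + 1) + 1)
        = centralBinomRatio n ^ 2 * (2 * n + 1) *
            ((2 * n + 1) * (2 * n + 3) / (2 * n + 2) ^ 2) := by
          rw [centralBinomRatio_succ]; push_cast; field_simp; ring
      _ ≤ 1 := mul_le_one₀ ih (by positivity) hratio

theorem one_le_four_mul_sq_centralBinomRatio (n : ℕ) :
    1 ≤ 4 * (n + 1) * centralBinomRatio (n + 1) ^ 2 := by
  induction n with
  | zero => norm_num [centralBinomRatio_succ, centralBinomRatio_zero]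
  | succ n ih =>
    push_cast
    have hratio : 1 ≤ (2 * (n : ℝ) + 3) ^ 2 / (4 * (n + 1) * (n + 2)) := by
      rw [le_div_iff₀ (by positivity)]; nlinarith
    calc (1 : ℝ)
        ≤ 4 * (n + 1) * centralBinomRatio (n + 1) ^ 2 *
            ((2 * n + 3) ^ 2 / (4 * (n + 1) * (n + 2))) :=
          one_le_mul_of_one_le_of_one_le ih hratio
      _ = 4 * (n + 1 + 1) * centralBinomRatio (n + 1 + 1) ^ 2 := by
          rw [centralBinomRatio_succ (n + 1)]; push_cast; field_simp; ring

theorem tendsto_centralBinomRatio : Tendsto centralBinomRatio atTop (𝓝 0) :=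
  tendsto_zero_of_sq_mul_le (fun n => (centralBinomRatio_pos n).le)
    (tendsto_atTop_add_const_right _ 1 <|
      tendsto_natCast_atTop_atTop.const_mul_atTop two_pos) sq_centralBinomRatio_mul_le

-- Summed over `n`, this is `(2κ + 1) S (κ + 1) = 2κ S κ` for `S κ = ∑ₙ c n / (n + κ)`.
theorem centralBinomRatio_div_telescope (κ : ℝ) (hκ : 0 < κ) (n : ℕ) :
    (2 * κ + 1) * (centralBinomRatio n / (n + (κ + 1))) - 2 * κ * (centralBinomRatio n / (n + κ)) =
      2 * n * centralBinomRatio n / (n + κ) -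
        2 * ↑(n + 1) * centralBinomRatio (n + 1) / (↑(n + 1) + κ) := by
  rw [centralBinomRatio_succ]
  push_cast
  field_simp
  ring

theorem hasSum_centralBinomRatio_div (k : ℕ) :
    HasSum (fun n : ℕ => centralBinomRatio n / (n + ((k : ℝ) + 1)))
      (1 / (((k : ℝ) + 1) * centralBinomRatio (k + 1))) := by
  induction k with
  | zero =>
    have h := (centralBinomRatio_antitone.const_mul two_pos.le).hasSum_sub_succ
      (by simpa using tendsto_centralBinomRatio.const_mul 2)
    convert h using 1
    · ext n
      rw [centralBinomRatio_succ]
      push_cast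
      field_simp
      ring
    · norm_num [centralBinomRatio_succ, centralBinomRatio_zero]
  | succ k ih =>
    push_cast
    set κ : ℝ := (k : ℝ) + 1
    have hκ : 0 < κ := by positivity
    have hs : Summable fun n : ℕ => centralBinomRatio n / (n + (κ + 1)) :=
      ih.summable.of_nonneg_of_le (fun n => div_nonneg (centralBinomRatio_pos n).le (by positivity))
        fun n => div_le_div_of_nonneg_left (centralBinomRatio_pos n).le (by positivity)
          (by linarith)
    set g : ℕ → ℝ := fun n => 2 * n * centralBinomRatio n / (n + κ)
    have hg : Tendsto g atTop (𝓝 0) := by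
      refine squeeze_zero (fun n => by have := centralBinomRatio_pos n; positivity) (fun n => ?_)
        (by simpa using tendsto_centralBinomRatio.const_mul 2)
      rw [div_le_iff₀ (by positivity)]
      nlinarith [centralBinomRatio_pos n]
    have htel : HasSum (fun n => g n - g (n + 1)) 0 := by
      have := ((hs.mul_left (2 * κ + 1)).sub (ih.summable.mul_left (2 * κ))).congr
        (centralBinomRatio_div_telescope κ hκ)
      simpa [g] using this.hasSum_sub_succ hg
    have key := (htel.add (ih.mul_left (2 * κ))).div_const (2 * κ + 1)
    have hval : (0 + 2 * κ * (1 / (κ * centralBinomRatio (k + 1)))) / (2 * κ + 1) =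
        1 / ((κ + 1) * centralBinomRatio (k + 1 + 1)) := by
      rw [centralBinomRatio_succ (k + 1)]
      have := centralBinomRatio_pos (k + 1)
      push_cast
      field_simp
      ring
    rw [hval] at key
    refine key.congr_fun fun n => ?_
    rw [eq_div_iff (by positivity)]
    linear_combination centralBinomRatio_div_telescope κ hκ n

/-- `betaJ m k = ∫₀¹ x ^ (2 * m) * (1 - x ^ 2) ^ k dx`, written through its product formula. -/
noncomputable def betaJ (m k : ℕ) : ℝ :=
  1 / (2 * (m : ℝ) + 1) * ∏ i ∈ range k, (2 * (i : ℝ) + 2) / (2 * m + 2 * i + 3)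

theorem betaJ_zero_right (m : ℕ) : betaJ m 0 = 1 / (2 * m + 1) := by simp [betaJ]

theorem betaJ_succ_right (m k : ℕ) :
    betaJ m (k + 1) = betaJ m k * ((2 * k + 2) / (2 * m + 2 * k + 3)) := by
  rw [betaJ, prod_range_succ, ← mul_assoc, ← betaJ]

theorem betaJ_pos (m k : ℕ) : 0 < betaJ m k := by
  unfold betaJ; positivity

theorem betaJ_succ_left (m k : ℕ) :
    betaJ (m + 1) k = betaJ m k * ((2 * m + 1) / (2 * m + 2 * k + 3)) := by
  induction k with
  | zero => rw [betaJ_zero_right, betaJ_zero_right]; push_cast; field_simp; ring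
  | succ k ih => rw [betaJ_succ_right, betaJ_succ_right, ih]; push_cast; field_simp; ring

theorem betaJ_succ_right_eq_sub (m k : ℕ) : betaJ m (k + 1) = betaJ m k - betaJ (m + 1) k := by
  rw [betaJ_succ_right, betaJ_succ_left]
  field_simp
  ring

theorem betaJ_antitone_left (k : ℕ) : Antitone fun m => betaJ m k :=
  antitone_nat_of_succ_le fun m => by
    linarith [betaJ_succ_right_eq_sub m k, betaJ_pos m (k + 1)]

theorem betaJ_antitone_right (m : ℕ) : Antitone (betaJ m) :=
  antitone_nat_of_succ_le fun k => by
    linarith [betaJ_succ_right_eq_sub m k, betaJ_pos (m + 1) k]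

theorem betaJ_zero_left (k : ℕ) : betaJ 0 k = 1 / (2 * (k + 1) * centralBinomRatio (k + 1)) := by
  induction k with
  | zero => norm_num [betaJ_zero_right, centralBinomRatio_succ, centralBinomRatio_zero]
  | succ k ih =>
    rw [betaJ_succ_right, ih, centralBinomRatio_succ (k + 1)]
    have := centralBinomRatio_pos (k + 1)
    push_cast
    field_simp
    ring

theorem tendsto_betaJ_right (m : ℕ) : Tendsto (betaJ m) atTop (𝓝 0) := by
  have h0 : Tendsto (betaJ 0) atTop (𝓝 0) := by
    refine tendsto_zero_of_sq_mul_le (fun k => (betaJ_pos 0 k).le)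
      (tendsto_atTop_add_const_right _ 1 tendsto_natCast_atTop_atTop) fun k => ?_
    have := one_le_four_mul_sq_centralBinomRatio k
    have hc := centralBinomRatio_pos (k + 1)
    rw [betaJ_zero_left, div_pow, one_pow, div_mul_eq_mul_div, one_mul, div_le_one (by positivity)]
    nlinarith
  exact squeeze_zero (fun k => (betaJ_pos m k).le)
    (fun k => betaJ_antitone_left k (Nat.zero_le m)) h0

theorem tendsto_betaJ_left (k : ℕ) : Tendsto (fun m => betaJ m k) atTop (𝓝 0) := by
  refine squeeze_zero (fun m => (betaJ_pos m k).le) (fun m => ?_)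
    tendsto_one_div_add_atTop_nhds_zero_nat
  calc betaJ m k ≤ betaJ m 0 := betaJ_antitone_right m (Nat.zero_le k)
    _ ≤ 1 / (m + 1) := by
      rw [betaJ_zero_right]
      gcongr
      linarith [(m.cast_nonneg : (0 : ℝ) ≤ m)]

theorem hasSum_betaJ_succ_left (k : ℕ) : HasSum (fun m => betaJ m (k + 1)) (betaJ 0 k) := by
  simpa [← betaJ_succ_right_eq_sub] using
    (betaJ_antitone_left k).hasSum_sub_succ (tendsto_betaJ_left k)

theorem hasSum_betaJ_succ_div (m : ℕ) :
    HasSum (fun k : ℕ => betaJ m (k + 1) / (k + 1)) (2 / (2 * m + 1) ^ 2) := by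
  have h := ((betaJ_antitone_right m).hasSum_sub_succ (tendsto_betaJ_right m)).mul_left
    (2 / (2 * (m : ℝ) + 1))
  have hval : 2 / (2 * (m : ℝ) + 1) * (betaJ m 0 - 0) = 2 / (2 * m + 1) ^ 2 := by
    rw [betaJ_zero_right, sub_zero]; field_simp
  rw [hval] at h
  refine h.congr_fun fun k => ?_
  rw [betaJ_succ_right]
  field_simp
  ring

theorem hasSum_one_div_sq_mul_centralBinomRatio :
    HasSum (fun k : ℕ => 1 / (((k : ℝ) + 1) ^ 2 * centralBinomRatio (k + 1))) (3 * zval 2) := by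
  have hcols := ((hasSum_one_div_odd_pow one_lt_two).mul_left 4).congr_fun
    fun m : ℕ => show 2 * (2 / (2 * (m : ℝ) + 1) ^ 2) = _ by ring
  rw [show (4 : ℝ) * ((1 - 1 / 2 ^ 2) * zval 2) = 3 * zval 2 by ring] at hcols
  refine (HasSum.of_hasSum_swap_of_nonneg (f := fun k m : ℕ => 2 / ((k : ℝ) + 1) * betaJ m (k + 1))
    (fun k m => mul_nonneg (by positivity) (betaJ_pos m (k + 1)).le)
    (fun k => (hasSum_betaJ_succ_left k).mul_left _)
    (fun m => ((hasSum_betaJ_succ_div m).mul_left 2).congr_fun fun k => by ring) hcols).congr_fun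
    fun k => ?_
  have := centralBinomRatio_pos (k + 1)
  rw [betaJ_zero_left]
  field_simp

theorem stmt_4 :
    ∑' n : ℕ, ((Nat.choose (2 * (n + 1)) (n + 1) : ℝ) / 4 ^ (n + 1)) * H (n + 1) / ((n : ℝ) + 1) =
    2 * zval 2 := by
  have hrows (n : ℕ) := (hasSum_one_div_mul_add n).mul_left (centralBinomRatio (n + 1))
  have hcols (k : ℕ) : HasSum (fun n : ℕ => centralBinomRatio (n + 1) *
      (1 / (((k : ℝ) + 1) * ((k : ℝ) + 1 + ((n : ℝ) + 1)))))
      (1 / (((k : ℝ) + 1) ^ 2 * centralBinomRatio (k + 1)) - 1 / ((k : ℝ) + 1) ^ 2) := by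
    have h := ((hasSum_nat_add_iff' 1).2 (hasSum_centralBinomRatio_div k)).div_const ((k : ℝ) + 1)
    have := centralBinomRatio_pos (k + 1)
    have hval : (1 / (((k : ℝ) + 1) * centralBinomRatio (k + 1)) - 1 / ((k : ℝ) + 1)) / (k + 1) =
        1 / (((k : ℝ) + 1) ^ 2 * centralBinomRatio (k + 1)) - 1 / ((k : ℝ) + 1) ^ 2 := by
      field_simp
    rw [sum_range_one, centralBinomRatio_zero, Nat.cast_zero, zero_add, hval] at h
    refine h.congr_fun fun n => ?_
    push_cast
    field_simp
    ring
  have h := HasSum.of_hasSum_swap_of_nonneg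
    (fun n k => mul_nonneg (centralBinomRatio_pos (n + 1)).le (by positivity)) hrows hcols
    (hasSum_one_div_sq_mul_centralBinomRatio.sub (hasSum_zval one_lt_two))
  rw [← show 3 * zval 2 - zval 2 = 2 * zval 2 by ring, ← h.tsum_eq]
  refine tsum_congr fun n => ?_
  rw [← centralBinomRatio_eq_choose]
  ring
end

section
/- The series ∑_{n=1}^∞ 4^n / (n^2 · C(2n,n)) equals 3ζ(2). -/
/-!
Since `C(2n+2, n+1) = 2(2n+1) C(2n, n)/(n+1)` and the Wallis integral
`∫₀¹ (1 - t²)ⁿ dt = 4ⁿ / ((2n+1) C(2n, n))`, the `n`-th term equals `2 ∫₀¹ (1 - t²)ⁿ/(n+1) dt`.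
Summing under the integral with `∑ xⁿ/(n+1) = -log(1 - x)/x` at `x = 1 - t²` turns the series
into `-4 ∫₀¹ log t / (1 - t²) dt`; expanding `1/(1 - t²)` geometrically and using
`∫₀¹ t^m log t dt = -1/(m+1)²` gives `4 ∑ 1/(2k+1)² = 3 ζ(2)`. Every function involved is
nonnegative, so both interchanges of sum and integral follow from monotone convergence.
-/

open Real Finset

open MeasureTheory Set

theorem MeasureTheory.tsum_ofReal_integral_eq_lintegral_ofReal {α ι : Type*} [MeasurableSpace α]
    [Countable ι] {μ : Measure α} {f : ι → α → ℝ} {F : α → ℝ} (hf : ∀ i, Integrable (f i) μ)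
    (hf_nonneg : ∀ i, 0 ≤ᵐ[μ] f i) (hF : ∀ᵐ x ∂μ, HasSum (fun i => f i x) (F x)) :
    ∑' i, ENNReal.ofReal (∫ x, f i x ∂μ) = ∫⁻ x, ENNReal.ofReal (F x) ∂μ := by
  simp_rw [ofReal_integral_eq_lintegral_ofReal (hf _) (hf_nonneg _)]
  rw [← lintegral_tsum fun i => (hf i).aemeasurable.ennreal_ofReal]
  refine lintegral_congr_ae ?_
  filter_upwards [hF, ae_all_iff.2 hf_nonneg] with x hx hx0
  rw [← hx.tsum_eq, ENNReal.ofReal_tsum_of_nonneg hx0 hx.summable]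

theorem hasSum_of_tsum_ofReal_eq_ofReal {ι : Type*} {a : ι → ℝ} {b : ℝ} (ha : ∀ i, 0 ≤ a i)
    (hb : 0 ≤ b) (h : ∑' i, ENNReal.ofReal (a i) = ENNReal.ofReal b) : HasSum a b := by
  have := ENNReal.hasSum_toReal (h ▸ ENNReal.ofReal_ne_top)
  rwa [← ENNReal.tsum_toReal_eq fun _ => ENNReal.ofReal_ne_top, h, ENNReal.toReal_ofReal hb,
    funext fun i => ENNReal.toReal_ofReal (ha i)] at this

theorem MeasureTheory.hasSum_integral_of_ae_hasSum_eq {α ι κ : Type*} [MeasurableSpace α]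
    [Countable ι] [Countable κ] {μ : Measure α} {f : ι → α → ℝ} {g : κ → α → ℝ} {F : α → ℝ}
    {b : ℝ} (hf : ∀ i, Integrable (f i) μ) (hf_nonneg : ∀ i, 0 ≤ᵐ[μ] f i)
    (hfF : ∀ᵐ x ∂μ, HasSum (fun i => f i x) (F x)) (hg : ∀ k, Integrable (g k) μ)
    (hg_nonneg : ∀ k, 0 ≤ᵐ[μ] g k) (hgF : ∀ᵐ x ∂μ, HasSum (fun k => g k x) (F x))
    (hb : HasSum (fun k => ∫ x, g k x ∂μ) b) :
    HasSum (fun i => ∫ x, f i x ∂μ) b := by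
  have hg_int_nonneg : ∀ k, 0 ≤ ∫ x, g k x ∂μ := fun k => integral_nonneg_of_ae (hg_nonneg k)
  refine hasSum_of_tsum_ofReal_eq_ofReal (fun i => integral_nonneg_of_ae (hf_nonneg i))
    (hb.nonneg hg_int_nonneg) ?_
  rw [tsum_ofReal_integral_eq_lintegral_ofReal hf hf_nonneg hfF,
    ← tsum_ofReal_integral_eq_lintegral_ofReal hg hg_nonneg hgF,
    ← ENNReal.ofReal_tsum_of_nonneg hg_int_nonneg hb.summable, hb.tsum_eq]

theorem integral_one_sub_sq_pow_succ (n : ℕ) :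
    (2 * (n : ℝ) + 3) * ∫ t in (0 : ℝ)..1, (1 - t ^ 2) ^ (n + 1) =
      (2 * (n : ℝ) + 2) * ∫ t in (0 : ℝ)..1, (1 - t ^ 2) ^ n := by
  have hderiv : ∀ t : ℝ, HasDerivAt (fun t => t * (1 - t ^ 2) ^ (n + 1))
      ((2 * (n : ℝ) + 3) * (1 - t ^ 2) ^ (n + 1) - (2 * (n : ℝ) + 2) * (1 - t ^ 2) ^ n) t := by
    intro t
    refine ((hasDerivAt_id t).mul (((hasDerivAt_pow 2 t).const_sub 1).pow (n + 1))).congr_deriv ?_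
    simp only [id, Nat.add_sub_cancel, Nat.cast_add, Nat.cast_one, Pi.pow_apply]
    ring
  rw [← intervalIntegral.integral_const_mul, ← intervalIntegral.integral_const_mul,
    ← sub_eq_zero, ← intervalIntegral.integral_sub, intervalIntegral.integral_eq_sub_of_hasDerivAt
      (fun t _ => hderiv t)]
  · norm_num
  all_goals exact Continuous.intervalIntegrable (by fun_prop) _ _

theorem integral_one_sub_sq_pow (n : ℕ) :
    ∫ t in (0 : ℝ)..1, (1 - t ^ 2) ^ n = 4 ^ n / ((2 * (n : ℝ) + 1) * n.centralBinom) := by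
  induction n with
  | zero => simp
  | succ n ih =>
    have hrec := integral_one_sub_sq_pow_succ n
    have hbinom : ((n : ℝ) + 1) * (n + 1).centralBinom = 2 * (2 * n + 1) * n.centralBinom := by
      exact_mod_cast Nat.succ_mul_centralBinom_succ n
    have := n.centralBinom_pos
    rw [ih] at hrec
    field_simp at hrec ⊢
    rw [eq_div_iff (Nat.cast_pos.2 (n + 1).centralBinom_pos).ne']
    refine mul_left_cancel₀ (n.cast_add_one_ne_zero (R := ℝ)) ?_
    push_cast
    linear_combination 2 * hrec + (2 * n + 3) * (∫ t in (0 : ℝ)..1, (1 - t ^ 2) ^ (n + 1)) * hbinom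

theorem intervalIntegrable_pow_mul_log (m : ℕ) (a b : ℝ) :
    IntervalIntegrable (fun t => t ^ m * Real.log t) volume a b :=
  intervalIntegral.intervalIntegrable_log'.continuousOn_mul (continuous_pow m).continuousOn

theorem integral_pow_mul_log (m : ℕ) :
    ∫ t in (0 : ℝ)..1, t ^ m * Real.log t = -1 / ((m : ℝ) + 1) ^ 2 := by
  have hderiv : ∀ t ∈ Ioo (0 : ℝ) 1, HasDerivAt
      (fun t => t ^ (m + 1) * Real.log t / (m + 1) - t ^ (m + 1) / (m + 1) ^ 2)
      (t ^ m * Real.log t) t := by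
    intro t ht
    refine ((((hasDerivAt_pow (m + 1) t).mul (Real.hasDerivAt_log ht.1.ne')).div_const
      ((m : ℝ) + 1)).sub ((hasDerivAt_pow (m + 1) t).div_const (((m : ℝ) + 1) ^ 2))).congr_deriv ?_
    have := ht.1.ne'
    simp only [Nat.add_sub_cancel, Nat.cast_add, Nat.cast_one]
    field_simp
    ring
  have hcont : ContinuousOn
      (fun t : ℝ => t ^ (m + 1) * Real.log t / (m + 1) - t ^ (m + 1) / (m + 1) ^ 2) (Icc 0 1) := by
    have : Continuous fun t : ℝ => t ^ (m + 1) * Real.log t :=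
      ((continuous_pow m).mul Real.continuous_mul_log).congr fun t => by
        simp only [Pi.mul_apply]; ring
    exact (by fun_prop : Continuous _).continuousOn
  rw [intervalIntegral.integral_eq_sub_of_hasDerivAt_of_le zero_le_one hcont hderiv
    (intervalIntegrable_pow_mul_log m 0 1)]
  simp [neg_div]

theorem hasSum_pow_div_succ {x : ℝ} (hx0 : x ≠ 0) (hx : |x| < 1) :
    HasSum (fun n : ℕ => x ^ n / (n + 1)) (-Real.log (1 - x) / x) :=
  ((Real.hasSum_pow_div_log_of_abs_lt_one hx).div_const x).congr_fun fun n => by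
    field_simp
    ring

theorem hasSum_one_sub_sq_pow_div_succ {t : ℝ} (ht : t ∈ Ioo (0 : ℝ) 1) :
    HasSum (fun n : ℕ => (1 - t ^ 2) ^ n / (n + 1)) (-2 * Real.log t / (1 - t ^ 2)) := by
  have h1 : 0 < 1 - t ^ 2 := by nlinarith [ht.1, ht.2]
  have h2 : |1 - t ^ 2| < 1 := by rw [abs_of_pos h1]; nlinarith [ht.1]
  have := hasSum_pow_div_succ h1.ne' h2
  rwa [sub_sub_cancel, Real.log_pow, Nat.cast_two, neg_mul_eq_neg_mul] at this

theorem hasSum_neg_two_mul_pow_mul_log {t : ℝ} (ht : |t| < 1) :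
    HasSum (fun k : ℕ => -2 * (t ^ (2 * k) * Real.log t)) (-2 * Real.log t / (1 - t ^ 2)) := by
  have hgeom := hasSum_geometric_of_abs_lt_one (r := t ^ 2)
    (by rw [abs_pow]; exact pow_lt_one₀ (abs_nonneg t) ht two_ne_zero)
  rw [div_eq_mul_inv]
  exact (hgeom.mul_left (-2 * Real.log t)).congr_fun fun k => by rw [pow_mul]; ring

theorem hasSum_one_div_odd_sq :
    HasSum (fun k : ℕ => 1 / (2 * (k : ℝ) + 1) ^ 2) (3 / 4 * zval 2) := by
  set f : ℕ → ℝ := fun n => 1 / ((n : ℝ) + 1) ^ 2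
  have hζ : HasSum f (zval 2) := by
    refine Summable.hasSum ?_
    simp only [f]
    exact_mod_cast (summable_nat_add_iff 1).2 (Real.summable_one_div_nat_pow.2 one_lt_two)
  have hodd : HasSum (fun k => f (2 * k + 1)) (zval 2 / 4) :=
    (hζ.div_const 4).congr_fun fun k => by
      simp only [f]
      push_cast
      field_simp
      ring
  have heven : Summable fun k => f (2 * k) :=
    hζ.summable.comp_injective (mul_right_injective₀ two_ne_zero)
  have hsplit := (heven.hasSum.even_add_odd hodd).unique hζ
  rw [show 3 / 4 * zval 2 = ∑' k, f (2 * k) by linarith]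
  exact heven.hasSum.congr_fun fun k => by simp only [f]; push_cast; rfl

theorem hasSum_integral_one_sub_sq_pow_div_succ :
    HasSum (fun n : ℕ => ∫ t in Ioo (0 : ℝ) 1, (1 - t ^ 2) ^ n / (n + 1)) (3 / 2 * zval 2) := by
  have hg : ∀ k : ℕ, ∫ t in Ioo (0 : ℝ) 1, -2 * (t ^ (2 * k) * Real.log t) =
      2 * (1 / (2 * (k : ℝ) + 1) ^ 2) := fun k => by
    rw [integral_const_mul, ← integral_Ioc_eq_integral_Ioo,
      ← intervalIntegral.integral_of_le zero_le_one, integral_pow_mul_log]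
    push_cast
    ring
  have hb := (hasSum_one_div_odd_sq.mul_left 2).congr_fun hg
  rw [← mul_assoc, show (2 : ℝ) * (3 / 4) = 3 / 2 by norm_num] at hb
  refine hasSum_integral_of_ae_hasSum_eq (fun n => ?_) (fun n => ?_)
    (ae_restrict_of_forall_mem measurableSet_Ioo fun t => hasSum_one_sub_sq_pow_div_succ)
    (fun k => ?_) (fun k => ?_) (ae_restrict_of_forall_mem measurableSet_Ioo fun t ht => ?_) hb
  · exact (Continuous.integrableOn_Icc (by fun_prop)).mono_set Ioo_subset_Icc_self
  · refine ae_restrict_of_forall_mem measurableSet_Ioo fun t ht => ?_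
    have : 0 ≤ 1 - t ^ 2 := by nlinarith [ht.1, ht.2]
    positivity
  · exact ((intervalIntegrable_pow_mul_log (2 * k) 0 1).1.mono_set Ioo_subset_Ioc_self).const_mul _
  · exact ae_restrict_of_forall_mem measurableSet_Ioo fun t ht =>
      mul_nonneg_of_nonpos_of_nonpos (by norm_num)
        (mul_nonpos_of_nonneg_of_nonpos (pow_nonneg ht.1.le _) (Real.log_nonpos ht.1.le ht.2.le))
  · exact hasSum_neg_two_mul_pow_mul_log (by rw [abs_of_pos ht.1]; exact ht.2)

theorem four_pow_div_sq_mul_choose_eq_integral (n : ℕ) :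
    (4 ^ (n + 1) : ℝ) / (((n : ℝ) + 1) ^ 2 * (Nat.choose (2 * (n + 1)) (n + 1) : ℝ)) =
      2 * ∫ t in Ioo (0 : ℝ) 1, (1 - t ^ 2) ^ n / (n + 1) := by
  rw [← Nat.centralBinom_eq_two_mul_choose, integral_div, ← integral_Ioc_eq_integral_Ioo,
    ← intervalIntegral.integral_of_le zero_le_one, integral_one_sub_sq_pow]
  have hbinom : ((n : ℝ) + 1) * (n + 1).centralBinom = 2 * (2 * n + 1) * n.centralBinom := by
    exact_mod_cast Nat.succ_mul_centralBinom_succ n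
  have := n.centralBinom_pos
  have := (n + 1).centralBinom_pos
  field_simp
  linear_combination (-2 : ℝ) * 4 ^ n * hbinom

theorem stmt_13 :
    ∑' n : ℕ, (4 ^ (n + 1) : ℝ) / (((n : ℝ) + 1) ^ 2 * (Nat.choose (2 * (n + 1)) (n + 1) : ℝ)) =
    3 * zval 2 := by
  have hsum := (hasSum_integral_one_sub_sq_pow_div_succ.mul_left 2).congr_fun
    four_pow_div_sq_mul_choose_eq_integral
  rw [hsum.tsum_eq]
  ring
end

section
/- The series ∑_{n=1}^∞ (1/4^n) * C(2n,n) * (H_{2n−1} − H_n) / n equals ln(2)^2. -/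
open Real Finset

/-!
Write `a n = C(2n,n) / 4^n` and `b n = a n / n`. From `(2n+2) a (n+1) = (2n+1) a n`, weighting the
convolutions by the index of one factor gives `∑_{i+j=n} a i * a j = 1` and
`∑_{i+j=n} b i * a j = 2 a n (H (2n) - H n)`; splitting `1/(ij) = (1/i + 1/j)/(i+j)` then identifies
the `n`-th term of the series with a quarter of the coefficient of `xⁿ` in `(∑ b n xⁿ)²`. So the
series is `(∑ b n)² / 4`. The first convolution says `(∑ a n xⁿ)² = 1/(1-x)`; as
`∑ b n xⁿ` has derivative `((1-x)^(-1/2) - 1)/x`, it equals `2 log 2 - 2 log (1 + √(1-x))`, and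
letting `x → 1⁻` (the `b n` are nonnegative) gives `∑ b n = 2 log 2`.
-/

open Filter Topology

def cauchyCoeff {R : Type*} [Semiring R] (f g : ℕ → R) (n : ℕ) : R :=
  ∑ p ∈ antidiagonal n, f p.1 * g p.2

section CauchyCoeff

variable {R : Type*} [CommSemiring R]

lemma cauchyCoeff_comm (f g : ℕ → R) (n : ℕ) : cauchyCoeff f g n = cauchyCoeff g f n := by
  rw [cauchyCoeff, ← Nat.sum_antidiagonal_swap]
  simp only [cauchyCoeff, Prod.fst_swap, Prod.snd_swap, mul_comm]

lemma cauchyCoeff_natCast_mul_add (f g : ℕ → R) (n : ℕ) :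
    cauchyCoeff (fun i ↦ (i : R) * f i) g n + cauchyCoeff f (fun j ↦ (j : R) * g j) n =
      n * cauchyCoeff f g n := by
  simp only [cauchyCoeff, mul_sum, ← sum_add_distrib]
  refine sum_congr rfl fun p hp ↦ ?_
  rw [← mem_antidiagonal.mp hp]
  push_cast
  ring

lemma cauchyCoeff_mul_pow (f g : ℕ → R) (x : R) (n : ℕ) :
    cauchyCoeff (fun i ↦ f i * x ^ i) (fun j ↦ g j * x ^ j) n = cauchyCoeff f g n * x ^ n := by
  rw [cauchyCoeff, cauchyCoeff, sum_mul]
  refine sum_congr rfl fun p hp ↦ ?_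
  rw [← mem_antidiagonal.mp hp, pow_add]
  ring

end CauchyCoeff

lemma hasSum_cauchyCoeff {f g : ℕ → ℝ} {s t : ℝ} (hf : HasSum f s) (hg : HasSum g t) :
    HasSum (cauchyCoeff f g) (s * t) := by
  have hf' := summable_norm_iff.mpr hf.summable
  have hg' := summable_norm_iff.mpr hg.summable
  rw [← hf.tsum_eq, ← hg.tsum_eq, tsum_mul_tsum_eq_tsum_sum_antidiagonal_of_summable_norm hf' hg']
  exact (summable_norm_sum_mul_antidiagonal_of_summable_norm hf' hg').of_norm.hasSum

lemma summable_mul_pow_of_abs_le {c : ℕ → ℝ} {M : ℝ} (hc : ∀ n, |c n| ≤ M) {x : ℝ}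
    (hx : |x| < 1) : Summable fun n ↦ c n * x ^ n := by
  refine .of_norm_bounded ((summable_geometric_of_lt_one (abs_nonneg x) hx).mul_left M) fun n ↦ ?_
  rw [norm_mul, norm_pow, Real.norm_eq_abs, Real.norm_eq_abs]
  exact mul_le_mul_of_nonneg_right (hc n) (by positivity)

lemma hasDerivAt_tsum_mul_pow {c : ℕ → ℝ} {M : ℝ} (hc : ∀ n, |(n + 1) * c (n + 1)| ≤ M) {y : ℝ}
    (hy : |y| < 1) :
    HasDerivAt (fun x ↦ ∑' n, c n * x ^ n) (∑' n, (n + 1) * c (n + 1) * y ^ n) y := by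
  obtain ⟨r, hyr, hr1⟩ := exists_between hy
  have hr0 : 0 < r := (abs_nonneg y).trans_lt hyr
  have hM : 0 ≤ M := (abs_nonneg _).trans (hc 0)
  have hderiv := hasDerivAt_tsum_of_isPreconnected (t := Set.Ioo (-r) r) (y₀ := 0)
    (g := fun n x ↦ c n * x ^ n) (g' := fun n x ↦ c n * (n * x ^ (n - 1)))
    ((summable_geometric_of_lt_one hr0.le hr1).mul_left (M / r)) isOpen_Ioo
    isPreconnected_Ioo (fun n x _ ↦ (hasDerivAt_pow n x).const_mul (c n)) ?bound
    (by simp [hr0]) (summable_of_ne_finset_zero (s := {0}) (by simp +contextual))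
    (abs_lt.mp hyr)
  case bound =>
    intro n x hx
    rcases n with _ | n
    · simp only [CharP.cast_eq_zero, zero_mul, mul_zero, norm_zero]
      positivity
    · have hxr : |x| ≤ r := (abs_lt.mpr hx).le
      rw [Real.norm_eq_abs, Nat.add_sub_cancel, pow_succ, ← mul_assoc, abs_mul,
        abs_pow, mul_comm (c _), show M / r * (r ^ n * r) = M * r ^ n by field_simp]
      push_cast
      exact mul_le_mul (hc n) (pow_le_pow_left₀ (abs_nonneg x) hxr n) (by positivity) hM
  have shift : ∑' n, c n * (n * y ^ (n - 1)) = ∑' n, (n + 1) * c (n + 1) * y ^ n := by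
    rw [tsum_eq_zero_add']
    · simp only [CharP.cast_eq_zero, zero_mul, mul_zero, zero_add, Nat.add_sub_cancel]
      exact tsum_congr fun n ↦ by push_cast; ring
    · exact (summable_mul_pow_of_abs_le hc hy).congr fun n ↦ by push_cast; ring
  exact shift ▸ hderiv

lemma hasSum_of_nonneg_of_tendsto_tsum_mul_pow {f : ℕ → ℝ} (hf : ∀ n, 0 ≤ f n) {l : ℝ}
    (hs : ∀ x ∈ Set.Ioo (0 : ℝ) 1, Summable fun n ↦ f n * x ^ n)
    (hl : Tendsto (fun x ↦ ∑' n, f n * x ^ n) (𝓝[<] 1) (𝓝 l)) : HasSum f l := by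
  have near_one : ∀ᶠ x in 𝓝[<] (1 : ℝ), x ∈ Set.Ioo 0 1 := Ioo_mem_nhdsLT zero_lt_one
  have partial_le (N : ℕ) : ∑ n ∈ range N, f n ≤ l := by
    have hpoly : Tendsto (fun x ↦ ∑ n ∈ range N, f n * x ^ n) (𝓝[<] 1)
        (𝓝 (∑ n ∈ range N, f n)) := by
      have : Continuous fun x : ℝ ↦ ∑ n ∈ range N, f n * x ^ n := by fun_prop
      simpa using (this.tendsto 1).mono_left nhdsWithin_le_nhds
    refine le_of_tendsto_of_tendsto hpoly hl (near_one.mono fun x hx ↦ ?_)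
    exact (hs x hx).sum_le_tsum _ fun n _ ↦ mul_nonneg (hf n) (pow_nonneg hx.1.le n)
  have hsum := summable_of_sum_range_le hf partial_le
  refine hsum.hasSum_iff.mpr (le_antisymm (hsum.tsum_le_of_sum_range_le partial_le) ?_)
  refine le_of_tendsto hl (near_one.mono fun x hx ↦ ?_)
  exact (hs x hx).tsum_le_tsum
    (fun n ↦ mul_le_of_le_one_right (hf n) (pow_le_one₀ hx.1.le hx.2.le)) hsum

lemma H_succ (n : ℕ) : H (n + 1) = H n + 1 / (n + 1) := sum_range_succ _ n

namespace CentralBinomSeries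

noncomputable def a (n : ℕ) : ℝ := n.centralBinom / 4 ^ n

-- `b 0 = a 0 / 0 = 0`, so `∑ b n xⁿ` has no constant term.
noncomputable def b (n : ℕ) : ℝ := a n / n

lemma a_zero : a 0 = 1 := by simp [a]

lemma a_pos (n : ℕ) : 0 < a n :=
  div_pos (mod_cast n.centralBinom_pos) (by positivity)

lemma a_le_one (n : ℕ) : a n ≤ 1 :=
  div_le_one_of_le₀ (mod_cast n.centralBinom_le_four_pow) (by positivity)

lemma abs_a_le_one (n : ℕ) : |a n| ≤ 1 := by
  rw [abs_of_pos (a_pos n)]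
  exact a_le_one n

lemma a_succ (n : ℕ) : (2 * n + 2) * a (n + 1) = (2 * n + 1) * a n := by
  have h : ((n : ℝ) + 1) * (n + 1).centralBinom = 2 * (2 * n + 1) * n.centralBinom := by
    exact_mod_cast n.succ_mul_centralBinom_succ
  simp only [a, pow_succ]
  field_simp
  linear_combination 2 * h

lemma b_zero : b 0 = 0 := by simp [b]

lemma b_nonneg (n : ℕ) : 0 ≤ b n := div_nonneg (a_pos n).le n.cast_nonneg

lemma abs_b_le_one (n : ℕ) : |b n| ≤ 1 := by
  rw [abs_of_nonneg (b_nonneg n)]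
  rcases n with _ | n
  · simp [b_zero]
  · exact (div_le_self (a_pos _).le (by simp)).trans (a_le_one _)

lemma succ_mul_b_succ (n : ℕ) : ((n : ℝ) + 1) * b (n + 1) = a (n + 1) := by
  rw [b]; push_cast; field_simp

lemma two_mul_cauchyCoeff_natCast_mul_a_succ (f : ℕ → ℝ) (n : ℕ) :
    2 * cauchyCoeff f (fun j ↦ (j : ℝ) * a j) (n + 1) =
      2 * cauchyCoeff f (fun j ↦ (j : ℝ) * a j) n + cauchyCoeff f a n := by
  simp only [cauchyCoeff, Nat.sum_antidiagonal_succ', CharP.cast_eq_zero, zero_mul, mul_zero,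
    zero_add, mul_sum, ← sum_add_distrib]
  refine sum_congr rfl fun p _ ↦ ?_
  push_cast
  linear_combination f p.1 * a_succ p.2

lemma cauchyCoeff_a_a (n : ℕ) : cauchyCoeff a a n = 1 := by
  have two_mul_weighted (n : ℕ) :
      n * cauchyCoeff a a n = 2 * cauchyCoeff a (fun j ↦ (j : ℝ) * a j) n := by
    rw [← cauchyCoeff_natCast_mul_add, cauchyCoeff_comm (fun i ↦ (i : ℝ) * a i)]
    ring
  induction n with
  | zero => simp [cauchyCoeff, a_zero]
  | succ n ih =>
    have h := two_mul_cauchyCoeff_natCast_mul_a_succ a n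
    rw [← two_mul_weighted, ← two_mul_weighted, ih] at h
    push_cast at h
    exact mul_left_cancel₀ n.cast_add_one_ne_zero (by linarith)

lemma cauchyCoeff_natCast_mul_b_a (n : ℕ) : cauchyCoeff (fun i ↦ (i : ℝ) * b i) a n = 1 - a n := by
  cases n with
  | zero => simp [cauchyCoeff, a_zero]
  | succ n =>
    rw [← cauchyCoeff_a_a (n + 1)]
    simp only [cauchyCoeff, Nat.sum_antidiagonal_succ, a_zero, Nat.cast_add, Nat.cast_one,
      succ_mul_b_succ]
    simp

lemma cauchyCoeff_b_a_succ (n : ℕ) :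
    2 * (n + 1) * cauchyCoeff b a (n + 1) =
      (2 * n + 1) * cauchyCoeff b a n + 2 * (a n - a (n + 1)) := by
  have h₀ := cauchyCoeff_natCast_mul_add b a n
  have h₁ := cauchyCoeff_natCast_mul_add b a (n + 1)
  rw [cauchyCoeff_natCast_mul_b_a] at h₀ h₁
  push_cast at h₁
  linarith [two_mul_cauchyCoeff_natCast_mul_a_succ b n]

lemma cauchyCoeff_b_a (n : ℕ) : cauchyCoeff b a n = 2 * a n * (H (2 * n) - H n) := by
  induction n with
  | zero => simp [cauchyCoeff, b]
  | succ n ih =>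
    have h := cauchyCoeff_b_a_succ n
    rw [ih] at h
    have hH : H (2 * (n + 1)) = H (2 * n) + 1 / (2 * n + 1) + 1 / (2 * n + 2) := by
      rw [show 2 * (n + 1) = 2 * n + 1 + 1 by ring, H_succ, H_succ]
      push_cast; ring
    have ha : a (n + 1) = (2 * n + 1) * a n / (2 * n + 2) := by
      rw [← a_succ]; field_simp
    apply mul_left_cancel₀ (show 2 * ((n : ℝ) + 1) ≠ 0 by positivity)
    rw [h, hH, H_succ, ha]
    field_simp
    ring

lemma cauchyCoeff_b_succ_b_succ (n : ℕ) :
    cauchyCoeff (fun i ↦ b (i + 1)) (fun j ↦ b (j + 1)) n =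
      4 * (a (n + 2) * (H (2 * n + 3) - H (n + 2)) / (n + 2)) := by
  have split : cauchyCoeff b a (n + 2) =
      b (n + 2) + cauchyCoeff (fun i ↦ b (i + 1)) (fun j ↦ a (j + 1)) n := by
    rw [cauchyCoeff, Nat.sum_antidiagonal_succ, Nat.sum_antidiagonal_succ']
    simp [b_zero, a_zero, cauchyCoeff]
  have partial_fractions : ((n : ℝ) + 2) * cauchyCoeff (fun i ↦ b (i + 1)) (fun j ↦ b (j + 1)) n =
      2 * cauchyCoeff (fun i ↦ b (i + 1)) (fun j ↦ a (j + 1)) n := by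
    rw [two_mul]
    nth_rw 2 [cauchyCoeff_comm]
    simp only [cauchyCoeff, mul_sum, ← sum_add_distrib]
    refine sum_congr rfl fun p hp ↦ ?_
    have hn : (n : ℝ) + 2 = (p.1 + 1) + (p.2 + 1) := by
      rw [← mem_antidiagonal.mp hp]; push_cast; ring
    rw [hn, ← succ_mul_b_succ p.1, ← succ_mul_b_succ p.2]
    ring
  have hH : H (2 * (n + 2)) = H (2 * n + 3) + 1 / (2 * n + 4) := by
    rw [show 2 * (n + 2) = 2 * n + 3 + 1 by ring, H_succ]
    push_cast; ring
  apply mul_left_cancel₀ (show (n : ℝ) + 2 ≠ 0 by positivity)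
  rw [partial_fractions, ← add_sub_cancel_left (b (n + 2)) (cauchyCoeff _ _ n), ← split,
    cauchyCoeff_b_a, hH, b]
  push_cast
  field_simp
  ring

lemma tsum_a_mul_pow {x : ℝ} (hx0 : 0 ≤ x) (hx1 : x < 1) :
    ∑' n, a n * x ^ n = (√(1 - x))⁻¹ := by
  have hsum := (summable_mul_pow_of_abs_le abs_a_le_one (abs_lt.mpr ⟨by linarith, hx1⟩)).hasSum
  have hsq : (∑' n, a n * x ^ n) ^ 2 = (1 - x)⁻¹ := by
    have hcoeff : cauchyCoeff (fun n ↦ a n * x ^ n) (fun n ↦ a n * x ^ n) = (x ^ ·) :=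
      funext fun n ↦ by rw [cauchyCoeff_mul_pow, cauchyCoeff_a_a, one_mul]
    rw [sq]
    exact (hcoeff ▸ hasSum_cauchyCoeff hsum hsum).unique (hasSum_geometric_of_lt_one hx0 hx1)
  have hpos : 0 ≤ ∑' n, a n * x ^ n :=
    tsum_nonneg fun n ↦ mul_nonneg (a_pos n).le (pow_nonneg hx0 n)
  rw [← Real.sqrt_inv, ← hsq, Real.sqrt_sq hpos]

lemma tsum_a_succ_mul_pow {x : ℝ} (hx0 : 0 ≤ x) (hx1 : x < 1) :
    ∑' n, a (n + 1) * x ^ n = (√(1 - x) * (1 + √(1 - x)))⁻¹ := by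
  rcases hx0.eq_or_lt with rfl | hx0
  · have ha : 2 * a 1 = 1 := by simpa [a_zero] using a_succ 0
    rw [tsum_eq_single 0 fun n hn ↦ by simp [hn]]
    norm_num
    linarith
  have hx : |x| < 1 := abs_lt.mpr ⟨by linarith, hx1⟩
  have hsplit : ∑' n, a n * x ^ n = 1 + x * ∑' n, a (n + 1) * x ^ n := by
    rw [(summable_mul_pow_of_abs_le abs_a_le_one hx).tsum_eq_zero_add, ← tsum_mul_left]
    simp only [a_zero, pow_zero, mul_one, pow_succ]
    congr 1
    exact tsum_congr fun n ↦ by ring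
  rw [tsum_a_mul_pow hx0.le hx1] at hsplit
  have hu : 0 < √(1 - x) := Real.sqrt_pos.mpr (by linarith)
  have hu2 : √(1 - x) ^ 2 = 1 - x := Real.sq_sqrt (by linarith)
  apply mul_left_cancel₀ hx0.ne'
  rw [← sub_eq_iff_eq_add'.mpr hsplit]
  field_simp
  nlinarith

lemma hasDerivAt_tsum_b_mul_pow {x : ℝ} (hx : |x| < 1) :
    HasDerivAt (fun x ↦ ∑' n, b n * x ^ n) (∑' n, a (n + 1) * x ^ n) x := by
  have hc (n : ℕ) : |(n + 1) * b (n + 1)| ≤ 1 := by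
    rw [succ_mul_b_succ]
    exact abs_a_le_one _
  simpa only [succ_mul_b_succ] using hasDerivAt_tsum_mul_pow hc hx

lemma tsum_b_mul_pow {x : ℝ} (hx0 : 0 ≤ x) (hx1 : x < 1) :
    ∑' n, b n * x ^ n = 2 * log 2 - 2 * log (1 + √(1 - x)) := by
  let F (z : ℝ) := ∑' n, b n * z ^ n + 2 * log (1 + √(1 - z))
  have hF (z : ℝ) (hz : z ∈ Set.Icc 0 x) : HasDerivAt F 0 z := by
    have hz1 : 0 < 1 - z := by linarith [hz.2]
    have hu : 0 < √(1 - z) := Real.sqrt_pos.mpr hz1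
    have hG := hasDerivAt_tsum_b_mul_pow (x := z) (abs_lt.mpr ⟨by linarith [hz.1], by linarith⟩)
    rw [tsum_a_succ_mul_pow hz.1 (by linarith)] at hG
    have hlog := ((((hasDerivAt_id' z).const_sub 1).sqrt hz1.ne').const_add 1).log
      (by positivity : 1 + √(1 - z) ≠ 0)
    have hcancel :
        (√(1 - z) * (1 + √(1 - z)))⁻¹ + 2 * (-1 / (2 * √(1 - z)) / (1 + √(1 - z))) = 0 := by
      field_simp
      ring
    have h := hG.add (hlog.const_mul 2)
    rwa [hcancel] at h
  have hconst := constant_of_has_deriv_right_zero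
    (fun z hz ↦ (hF z hz).continuousAt.continuousWithinAt)
    (fun z hz ↦ (hF z (Set.Ico_subset_Icc_self hz)).hasDerivWithinAt) x ⟨hx0, le_rfl⟩
  have hG0 : ∑' n, b n * (0 : ℝ) ^ n = 0 := by
    rw [tsum_eq_single 0 fun n hn ↦ by simp [hn]]
    simp [b_zero]
  simp only [F, hG0, sub_zero, Real.sqrt_one] at hconst
  norm_num at hconst
  linarith

lemma hasSum_b : HasSum b (2 * log 2) := by
  refine hasSum_of_nonneg_of_tendsto_tsum_mul_pow b_nonneg
    (fun x hx ↦ summable_mul_pow_of_abs_le abs_b_le_one (abs_lt.mpr ⟨by linarith [hx.1], hx.2⟩)) ?_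
  have hcont : ContinuousAt (fun x : ℝ ↦ 2 * log 2 - 2 * log (1 + √(1 - x))) 1 :=
    continuousAt_const.sub (continuousAt_const.mul ((by fun_prop : ContinuousAt
      (fun x : ℝ ↦ 1 + √(1 - x)) 1).log (by simp)))
  refine Tendsto.congr' ?_ (by simpa using hcont.tendsto.mono_left nhdsWithin_le_nhds)
  filter_upwards [Ioo_mem_nhdsLT zero_lt_one] with x hx
  exact (tsum_b_mul_pow hx.1.le hx.2).symm

end CentralBinomSeries

open CentralBinomSeries

theorem stmt_18 :
    ∑' n : ℕ, ((Nat.choose (2 * (n + 1)) (n + 1) : ℝ) / 4 ^ (n + 1)) * (H (2 * n + 1) - H (n + 1)) / ((n : ℝ) + 1) =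
    Real.log 2 ^ 2 := by
  have hb : HasSum (fun n ↦ b (n + 1)) (2 * log 2) := by
    simpa [b_zero] using (hasSum_nat_add_iff' 1).mpr hasSum_b
  have hterm (n : ℕ) : ((Nat.choose (2 * (n + 2)) (n + 2) : ℝ) / 4 ^ (n + 2)) *
      (H (2 * (n + 1) + 1) - H (n + 2)) / ((n + 1 : ℕ) + 1) =
      cauchyCoeff (fun i ↦ b (i + 1)) (fun j ↦ b (j + 1)) n / 4 := by
    rw [cauchyCoeff_b_succ_b_succ, a, Nat.centralBinom_eq_two_mul_choose,
      show 2 * (n + 1) + 1 = 2 * n + 3 by ring]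
    push_cast
    ring
  refine ((hasSum_nat_add_iff' 1).mp ?_).tsum_eq
  simp only [hterm, range_one, sum_singleton, sub_self, mul_zero, zero_div, sub_zero]
  rw [show log 2 ^ 2 = 2 * log 2 * (2 * log 2) / 4 by ring]
  exact (hasSum_cauchyCoeff hb hb).div_const 4
end
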